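/- Two Gauss codes w and w' on n letters are orientedly equivalent if and only if proj^LC(w) = proj^LC(w'). Moreover proj^LC(w) is left canonical for every Gauss code w, and proj^LC(w) = w whenever w is left canonical; hence proj^LC induces a bijection between the set of oriented equivalence classes of Gauss codes on n letters and the set of left canonical Gauss codes on n letters. -/

import Mathlib

/-- A Gauss code on `n` letters: a bijection from the `2*n` positions to
letters paired with a side (`false` = L, `true` = R). -/
abbrev GaussCode (n : ℕ) := Fin (2 * n) ≃ Fin n × Bool

instance (n : ℕ) [NeZero n] : NeZero (2 * n) := ⟨by have := NeZero.ne n; omega⟩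

namespace GaussCode

variable {n : ℕ}

/-- `π_*(w)`: relabel the letters by the permutation `π`. -/
def permAct (π : Equiv.Perm (Fin n)) (w : GaussCode n) : GaussCode n :=
  w.trans (π.prodCongr (Equiv.refl Bool))

open Fin.NatCast in
/-- `shift[m](w)`: the code whose entry at position `i` is the entry of `w` at
position `i + m` (mod `2n`). -/
def shift [NeZero n] (m : ℕ) (w : GaussCode n) : GaussCode n :=
  (Equiv.addRight ((m : Fin (2 * n)))).trans w

/-- `rev(w)`: the code whose entry at position `i` is the entry of `w` at
position `2n - 1 - i`. -/
def rev (w : GaussCode n) : GaussCode n :=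
  (Fin.revPerm).trans w

/-- A Gauss code is left preferred if its `L`-entries appear in the order
`(1,L), (2,L), …, (n,L)` and its entry at position `0` is `(1,L)`. -/
def IsLeftPreferred [NeZero n] (w : GaussCode n) : Prop :=
  StrictMono (fun j : Fin n => w.symm (j, false)) ∧ w 0 = (0, false)

/-- `proj^LP(w)`: relabel letters in the order of appearance of their `L`-entries,
then rotate so that `(1,L)` is at position `0`. -/
def projLP [NeZero n] (w : GaussCode n) : GaussCode n :=
  let π : Equiv.Perm (Fin n) := (Tuple.sort (fun j : Fin n => w.symm (j, false)))⁻¹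
  let w' := permAct π w
  shift ((w'.symm ((0 : Fin n), false)).val) w'

/-- `shift^LP(w) := proj^LP(shift[1](w))`. -/
def shiftLP [NeZero n] (w : GaussCode n) : GaussCode n :=
  projLP (shift 1 w)

/-- `rev^LP(w) := proj^LP(rev(w))`. -/
def revLP [NeZero n] (w : GaussCode n) : GaussCode n :=
  projLP (rev w)

/-- The value of an entry in the order `(1,L) < (1,R) < (2,L) < (2,R) < …`. -/
def entryKey (e : Fin n × Bool) : ℕ :=
  2 * e.1.val + (if e.2 then 1 else 0)

/-- Lexicographic (strict) order on Gauss codes, comparing entries position by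
position in the order `(1,L) < (1,R) < (2,L) < (2,R) < …`. -/
def lexLt (w w' : GaussCode n) : Prop :=
  ∃ i : Fin (2 * n), (∀ k, k < i → w k = w' k) ∧ entryKey (w i) < entryKey (w' i)

/-- Lexicographic order on Gauss codes. -/
def lexLe (w w' : GaussCode n) : Prop :=
  w = w' ∨ lexLt w w'

/-- A left preferred Gauss code is left canonical if it is the smallest element
of its `shift^LP`-orbit `{w, shift^LP(w), …, (shift^LP)^{n-1}(w)}`. -/
def IsLeftCanonical [NeZero n] (w : GaussCode n) : Prop :=
  IsLeftPreferred w ∧ ∀ k < n, lexLe w (shiftLP^[k] w)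

/-- `proj^LC(w)`: the smallest element of the `shift^LP`-orbit of `proj^LP(w)`. -/
noncomputable def projLC [NeZero n] (w : GaussCode n) : GaussCode n :=
  letI := Classical.propDecidable
  if h : ∃ v : GaussCode n, (∃ k < n, v = shiftLP^[k] (projLP w)) ∧
      ∀ k < n, lexLe v (shiftLP^[k] (projLP w))
  then h.choose else projLP w

/-- `rev^LC(w) := proj^LC(rev(w))`. -/
noncomputable def revLC [NeZero n] (w : GaussCode n) : GaussCode n :=
  projLC (rev w)

/-- Oriented equivalence of Gauss codes: `w' = shift[m](π_*(w))` for some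
permutation `π` and integer `m`. -/
def OrientedEquiv [NeZero n] (w w' : GaussCode n) : Prop :=
  ∃ (π : Equiv.Perm (Fin n)) (m : ℕ), w' = shift m (permAct π w)

/-- Unoriented equivalence: `w` is orientedly equivalent to `w'` or to `rev(w')`. -/
def UnorientedEquiv [NeZero n] (w w' : GaussCode n) : Prop :=
  OrientedEquiv w w' ∨ OrientedEquiv w (rev w')

/-- A Gauss code is 1-reducible if two cyclically adjacent entries share the same letter. -/
def OneReducible [NeZero n] (w : GaussCode n) : Prop :=
  ∃ i : Fin (2 * n), (w i).1 = (w (i + 1)).1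

/-- A Gauss code is 2-reducible (cyclically, with `L = false`, `R = true`). -/
def TwoReducible [NeZero n] (w : GaussCode n) : Prop :=
  ∃ (i i' : Fin (2 * n)) (j k : Fin n), j ≠ k ∧
    ((w i = (j, false) ∧ w (i + 1) = (k, true) ∧
        w i' = (j, true) ∧ w (i' + 1) = (k, false)) ∨
     (w i = (j, false) ∧ w (i + 1) = (k, true) ∧
        w i' = (k, false) ∧ w (i' + 1) = (j, true)) ∨
     (w i = (j, true) ∧ w (i + 1) = (k, false) ∧
        w i' = (k, true) ∧ w (i' + 1) = (j, false)))

/-- A Gauss code is minimal if it is neither 1-reducible nor 2-reducible. -/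
def IsMinimal [NeZero n] (w : GaussCode n) : Prop :=
  ¬ OneReducible w ∧ ¬ TwoReducible w

/-- `σ_w`: the involution of positions sending each position to the unique other
position carrying the same letter. -/
def sigmaMap (w : GaussCode n) : Fin (2 * n) → Fin (2 * n) :=
  fun i => w.symm ((w i).1, !(w i).2)

/-- `h_w`: the side (`false` = L, `true` = R) of the entry at each position. -/
def hMap (w : GaussCode n) : Fin (2 * n) → Bool :=
  fun i => (w i).2

end GaussCode

/-!
`proj^LP` is a normal form for relabelling letters and rotating to an `L` entry. Rotating the
input of `proj^LP` by one position past an `R` entry does not change the result, and rotating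
past an `L` entry applies `shift^LP`. Hence the left preferred codes orientedly equivalent to a
left preferred `w` are exactly its `shift^LP`-orbit, and after `2n` rotations, i.e. `n` steps of
`shift^LP`, one is back at `w`. So `proj^LC(w)` is the lexicographically least left preferred
code in the oriented equivalence class of `w`, which depends only on that class.
-/

namespace GaussCode

open Fin.NatCast Finset

variable {n : ℕ}

@[simp] lemma permAct_apply (π : Equiv.Perm (Fin n)) (w : GaussCode n) (i : Fin (2 * n)) :
    permAct π w i = (π (w i).1, (w i).2) := rfl

@[simp] lemma permAct_symm_apply (π : Equiv.Perm (Fin n)) (w : GaussCode n) (j : Fin n)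
    (s : Bool) : (permAct π w).symm (j, s) = w.symm (π⁻¹ j, s) := rfl

@[simp] lemma permAct_one (w : GaussCode n) : permAct 1 w = w := rfl

lemma permAct_permAct (π ρ : Equiv.Perm (Fin n)) (w : GaussCode n) :
    permAct π (permAct ρ w) = permAct (π * ρ) w := rfl

def lPos (w : GaussCode n) (j : Fin n) : Fin (2 * n) := w.symm (j, false)

lemma lPos_injective (w : GaussCode n) : Function.Injective (lPos w) :=
  fun _ _ h => congrArg Prod.fst (w.symm.injective h)

@[simp] lemma lPos_permAct (π : Equiv.Perm (Fin n)) (w : GaussCode n) (j : Fin n) :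
    lPos (permAct π w) j = lPos w (π⁻¹ j) := rfl

lemma permAct_eq_of_strictMono_lPos {π ρ : Equiv.Perm (Fin n)} {w : GaussCode n}
    (hπ : StrictMono (lPos (permAct π w))) (hρ : StrictMono (lPos (permAct ρ w))) :
    permAct π w = permAct ρ w := by
  have hrange (σ : Equiv.Perm (Fin n)) : Set.range (lPos (permAct σ w)) = Set.range (lPos w) :=
    EquivLike.range_comp (lPos w) σ⁻¹
  have hlPos := (hπ.range_inj hρ).1 ((hrange π).trans (hrange ρ).symm)
  have hinv : π⁻¹ = ρ⁻¹ := Equiv.ext fun j => lPos_injective w (congrFun hlPos j)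
  rw [inv_inj.1 hinv]

def sortPerm (w : GaussCode n) : Equiv.Perm (Fin n) := (Tuple.sort (lPos w))⁻¹

lemma strictMono_lPos_sortPerm (w : GaussCode n) :
    StrictMono (lPos (permAct (sortPerm w) w)) :=
  (Tuple.monotone_sort (lPos w)).strictMono_of_injective
    ((lPos_injective w).comp (Tuple.sort (lPos w)).injective)

section Rotation

variable [NeZero n]

@[simp] lemma shift_apply (m : ℕ) (w : GaussCode n) (i : Fin (2 * n)) :
    shift m w i = w (i + m) := rfl

@[simp] lemma shift_symm_apply (m : ℕ) (w : GaussCode n) (e : Fin n × Bool) :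
    (shift m w).symm e = w.symm e - m := by
  simp [shift, sub_eq_add_neg]

lemma shift_shift (a b : ℕ) (w : GaussCode n) : shift a (shift b w) = shift (b + a) w :=
  Equiv.ext fun i => by simp [add_assoc, add_comm (a : Fin (2 * n))]

@[simp] lemma shift_zero (w : GaussCode n) : shift 0 w = w :=
  Equiv.ext fun i => by simp

lemma shift_two_mul_mul (k : ℕ) (w : GaussCode n) : shift (2 * n * k) w = w :=
  Equiv.ext fun i => by simp

lemma shift_permAct (m : ℕ) (π : Equiv.Perm (Fin n)) (w : GaussCode n) :
    shift m (permAct π w) = permAct π (shift m w) := rfl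

lemma val_lPos_shift {m : ℕ} {w : GaussCode n} {j : Fin n} (h : m ≤ (lPos w j).val) :
    (lPos (shift m w) j).val = (lPos w j).val - m := by
  have hm : ((m : Fin (2 * n)) : ℕ) = m := Fin.val_cast_of_lt (h.trans_lt (lPos w j).isLt)
  have hle : (m : Fin (2 * n)) ≤ lPos w j := Fin.le_def.2 (by rwa [hm])
  rw [lPos, shift_symm_apply, ← lPos, Fin.coe_sub_iff_le.2 hle, hm]

lemma strictMono_lPos_shift_iff {m : ℕ} {w : GaussCode n} (h : ∀ j, m ≤ (lPos w j).val) :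
    StrictMono (lPos (shift m w)) ↔ StrictMono (lPos w) := by
  simp only [StrictMono, Fin.lt_def, val_lPos_shift (h _)]
  refine forall₂_congr fun a b => imp_congr_right fun _ => ?_
  have := h a; have := h b
  omega

lemma projLP_eq (w : GaussCode n) :
    projLP w = shift (lPos (permAct (sortPerm w) w) 0).val (permAct (sortPerm w) w) := rfl

lemma exists_projLP_eq (w : GaussCode n) :
    ∃ (π : Equiv.Perm (Fin n)) (m : ℕ), (∀ j, m ≤ (lPos w j).val) ∧
      projLP w = shift m (permAct π w) := by
  refine ⟨sortPerm w, _, fun j => ?_, projLP_eq w⟩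
  have h := (strictMono_lPos_sortPerm w).monotone (Fin.zero_le (sortPerm w j))
  rwa [lPos_permAct _ _ (sortPerm w j), Equiv.Perm.coe_inv, Equiv.symm_apply_apply] at h

lemma projLP_isLeftPreferred (w : GaussCode n) : IsLeftPreferred (projLP w) := by
  refine ⟨?_, ?_⟩
  · refine (strictMono_lPos_shift_iff fun j => ?_).2 (strictMono_lPos_sortPerm w)
    exact (strictMono_lPos_sortPerm w).monotone (Fin.zero_le j)
  · rw [projLP_eq, shift_apply, zero_add, Fin.cast_val_eq_self]
    exact Equiv.apply_symm_apply _ _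

lemma eq_projLP {u v : GaussCode n} {π : Equiv.Perm (Fin n)} {m : ℕ}
    (hv : IsLeftPreferred v) (hm : ∀ j, m ≤ (lPos u j).val) (h : v = shift m (permAct π u)) :
    v = projLP u := by
  subst h
  have hmono : StrictMono (lPos (permAct π u)) :=
    (strictMono_lPos_shift_iff fun j => hm (π⁻¹ j)).1 hv.1
  have hrel := permAct_eq_of_strictMono_lPos hmono (strictMono_lPos_sortPerm u)
  have hm0 : lPos (permAct π u) 0 = m := by
    rw [lPos, Equiv.symm_apply_eq, ← hv.2, shift_apply, zero_add]
  rw [projLP_eq, ← hrel, hm0, Fin.val_cast_of_lt ((hm (π⁻¹ 0)).trans_lt (Fin.isLt _))]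

lemma projLP_of_isLeftPreferred {w : GaussCode n} (hw : IsLeftPreferred w) : projLP w = w :=
  (eq_projLP hw (π := 1) (fun _ => Nat.zero_le _) (by simp)).symm

lemma projLP_permAct (π : Equiv.Perm (Fin n)) (w : GaussCode n) :
    projLP (permAct π w) = projLP w := by
  obtain ⟨ρ, m, hm, h⟩ := exists_projLP_eq (permAct π w)
  refine eq_projLP (π := ρ * π) (projLP_isLeftPreferred _) (fun j => ?_) h
  simpa using hm (π j)

lemma projLP_shift_one_of_R {u : GaussCode n} (h : (u 0).2 = true) :
    projLP (shift 1 u) = projLP u := by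
  obtain ⟨π, m, hm, hu⟩ := exists_projLP_eq u
  have hpos (j : Fin n) : 1 ≤ (lPos u j).val := by
    refine Nat.one_le_iff_ne_zero.2 fun h0 => ?_
    have : u 0 = (j, false) := by
      rw [← (Fin.ext h0 : lPos u j = 0), lPos, Equiv.apply_symm_apply]
    simp [this] at h
  have hm1 : 1 ≤ m := by
    refine Nat.one_le_iff_ne_zero.2 fun h0 => ?_
    have h0L := congrArg Prod.snd (projLP_isLeftPreferred u).2
    simp [hu, h0, h] at h0L
  refine (eq_projLP (projLP_isLeftPreferred u) (m := m - 1) (π := π) (fun j => ?_) ?_).symm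
  · rw [val_lPos_shift (hpos j)]
    have := hm j
    omega
  · rw [hu, shift_permAct, shift_permAct, shift_shift, Nat.add_sub_cancel' hm1]

lemma projLP_shift_one_of_L {u : GaussCode n} (h : (u 0).2 = false) :
    projLP (shift 1 u) = shiftLP (projLP u) := by
  obtain ⟨π, m, hm, hu⟩ := exists_projLP_eq u
  have hm0 : m = 0 := by
    have hL : lPos u (u 0).1 = 0 := by
      rw [lPos, Equiv.symm_apply_eq, ← h]
    simpa [hL] using hm (u 0).1
  rw [shiftLP, hu, hm0, shift_zero, shift_permAct, projLP_permAct]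

/-- Position `i` is read mod `2n`. -/
def numL (w : GaussCode n) (m : ℕ) : ℕ := ∑ i ∈ range m, if (w i).2 then 0 else 1

lemma numL_two_mul (w : GaussCode n) : numL w (2 * n) = n := by
  let f : Fin n × Bool → ℕ := fun e => if e.2 then 0 else 1
  calc numL w (2 * n) = ∑ i : Fin (2 * n), f (w i) := by
        rw [numL, ← Fin.sum_univ_eq_sum_range (fun i => f (w i))]
        simp only [Fin.cast_val_eq_self]
    _ = ∑ e, f e := w.sum_comp f
    _ = n := by simp [f, Fintype.sum_prod_type]

lemma shiftLP_iterate_numL {w : GaussCode n} (hw : IsLeftPreferred w) (m : ℕ) :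
    shiftLP^[numL w m] w = projLP (shift m w) := by
  induction m with
  | zero => simp [numL, projLP_of_isLeftPreferred hw]
  | succ m ih =>
    have hfirst : shift m w 0 = w m := by simp
    rw [← shift_shift, numL, sum_range_succ, ← numL]
    cases hside : (w m).2
    · rw [if_neg (by simp), Function.iterate_succ_apply', ih,
        projLP_shift_one_of_L (hfirst ▸ hside)]
    · rw [if_pos rfl, add_zero, ih, projLP_shift_one_of_R (hfirst ▸ hside)]

lemma isPeriodicPt_shiftLP {w : GaussCode n} (hw : IsLeftPreferred w) :
    Function.IsPeriodicPt shiftLP n w := by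
  have := shiftLP_iterate_numL hw (2 * n * 1)
  rwa [shift_two_mul_mul, mul_one, numL_two_mul, projLP_of_isLeftPreferred hw] at this

lemma isLeftPreferred_shiftLP_iterate {w : GaussCode n} (hw : IsLeftPreferred w) :
    ∀ k, IsLeftPreferred (shiftLP^[k] w)
  | 0 => hw
  | _ + 1 => by rw [Function.iterate_succ_apply']; exact projLP_isLeftPreferred _

namespace OrientedEquiv

lemma refl (w : GaussCode n) : OrientedEquiv w w := ⟨1, 0, by simp⟩

lemma symm {w w' : GaussCode n} (h : OrientedEquiv w w') : OrientedEquiv w' w := by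
  obtain ⟨π, m, rfl⟩ := h
  refine ⟨π⁻¹, (2 * n - 1) * m, ?_⟩
  have hm : m + (2 * n - 1) * m = 2 * n * m := by
    have := NeZero.pos n
    calc m + (2 * n - 1) * m = (1 + (2 * n - 1)) * m := by ring
      _ = 2 * n * m := by congr 1; omega
  simp only [shift_permAct, permAct_permAct, shift_shift]
  rw [inv_mul_cancel, permAct_one, hm, shift_two_mul_mul]

lemma trans {w w' w'' : GaussCode n} (h : OrientedEquiv w w') (h' : OrientedEquiv w' w'') :
    OrientedEquiv w w'' := by
  obtain ⟨π, m, rfl⟩ := h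
  obtain ⟨π', m', rfl⟩ := h'
  exact ⟨π' * π, m + m', by simp only [shift_permAct, permAct_permAct, shift_shift]⟩

end OrientedEquiv

lemma orientedEquiv_shift (m : ℕ) (w : GaussCode n) : OrientedEquiv w (shift m w) :=
  ⟨1, m, rfl⟩

lemma orientedEquiv_projLP (w : GaussCode n) : OrientedEquiv w (projLP w) :=
  ⟨sortPerm w, _, projLP_eq w⟩

lemma orientedEquiv_shiftLP_iterate (w : GaussCode n) :
    ∀ k, OrientedEquiv w (shiftLP^[k] w)
  | 0 => .refl w
  | k + 1 => by
    rw [Function.iterate_succ_apply']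
    exact (orientedEquiv_shiftLP_iterate w k).trans
      ((orientedEquiv_shift 1 _).trans (orientedEquiv_projLP _))

lemma exists_shiftLP_iterate_eq_iff {w v : GaussCode n} (hw : IsLeftPreferred w) :
    (∃ k < n, v = shiftLP^[k] w) ↔ IsLeftPreferred v ∧ OrientedEquiv w v := by
  constructor
  · rintro ⟨k, -, rfl⟩
    exact ⟨isLeftPreferred_shiftLP_iterate hw k, orientedEquiv_shiftLP_iterate w k⟩
  · rintro ⟨hv, π, m, rfl⟩
    refine ⟨numL w m % n, Nat.mod_lt _ (NeZero.pos n), ?_⟩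
    rw [(isPeriodicPt_shiftLP hw).iterate_mod_apply, shiftLP_iterate_numL hw,
      ← projLP_permAct π, ← shift_permAct, projLP_of_isLeftPreferred hv]

end Rotation

noncomputable def lexKey (w : GaussCode n) : Lex (Fin (2 * n) → ℕ) :=
  toLex fun i => entryKey (w i)

lemma entryKey_injective : Function.Injective (entryKey (n := n)) := by
  rintro ⟨a, s⟩ ⟨b, t⟩ h
  simp only [entryKey] at h
  obtain ⟨hab, rfl⟩ : a.val = b.val ∧ s = t := by
    cases s <;> cases t <;> simp at h ⊢ <;> omega
  rw [Fin.ext hab]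

lemma lexKey_injective : Function.Injective (lexKey (n := n)) :=
  fun _ _ h => Equiv.ext fun i => entryKey_injective (congrFun (congrArg ofLex h) i)

lemma lexLe_iff_lexKey_le (w w' : GaussCode n) : lexLe w w' ↔ lexKey w ≤ lexKey w' := by
  have hlt : lexLt w w' ↔ lexKey w < lexKey w' := by
    refine exists_congr fun i => and_congr_left fun _ => forall₂_congr fun k _ => ?_
    exact ⟨congrArg entryKey, fun h => entryKey_injective h⟩
  rw [lexLe, hlt, le_iff_eq_or_lt, lexKey_injective.eq_iff]
  exact Iff.rfl

lemma lexLe_antisymm {w w' : GaussCode n} (h : lexLe w w') (h' : lexLe w' w) : w = w' :=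
  lexKey_injective (le_antisymm ((lexLe_iff_lexKey_le _ _).1 h) ((lexLe_iff_lexKey_le _ _).1 h'))

variable [NeZero n]

def IsLexLeastLP (u v : GaussCode n) : Prop :=
  IsLeftPreferred v ∧ OrientedEquiv u v ∧
    ∀ v', IsLeftPreferred v' → OrientedEquiv u v' → lexLe v v'

lemma IsLexLeastLP.unique {u v v' : GaussCode n} (h : IsLexLeastLP u v)
    (h' : IsLexLeastLP u v') : v = v' :=
  lexLe_antisymm (h.2.2 v' h'.1 h'.2.1) (h'.2.2 v h.1 h.2.1)

lemma IsLexLeastLP.of_orientedEquiv {u u' v : GaussCode n} (h : IsLexLeastLP u v)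
    (hu : OrientedEquiv u u') : IsLexLeastLP u' v :=
  ⟨h.1, hu.symm.trans h.2.1, fun v' hv' hu' => h.2.2 v' hv' (hu.trans hu')⟩

lemma exists_lexLe_shiftLP_iterate (w : GaussCode n) :
    ∃ v : GaussCode n, (∃ k < n, v = shiftLP^[k] w) ∧ ∀ k < n, lexLe v (shiftLP^[k] w) := by
  obtain ⟨k, hk, hmin⟩ := (range n).exists_min_image (fun k => lexKey (shiftLP^[k] w))
    ⟨0, mem_range.2 (NeZero.pos n)⟩
  exact ⟨_, ⟨k, mem_range.1 hk, rfl⟩,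
    fun k' hk' => (lexLe_iff_lexKey_le _ _).2 (hmin k' (mem_range.2 hk'))⟩

lemma isLexLeastLP_projLC (u : GaussCode n) : IsLexLeastLP u (projLC u) := by
  have hex := exists_lexLe_shiftLP_iterate (projLP u)
  have hLP := projLP_isLeftPreferred u
  obtain ⟨hmem, hmin⟩ : (∃ k < n, projLC u = shiftLP^[k] (projLP u)) ∧
      ∀ k < n, lexLe (projLC u) (shiftLP^[k] (projLP u)) := by
    rw [projLC, dif_pos hex]
    exact hex.choose_spec
  obtain ⟨hv, hequiv⟩ := (exists_shiftLP_iterate_eq_iff hLP).1 hmem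
  refine ⟨hv, (orientedEquiv_projLP u).trans hequiv, fun v' hv' hu => ?_⟩
  obtain ⟨k, hk, rfl⟩ :=
    (exists_shiftLP_iterate_eq_iff hLP).2 ⟨hv', (orientedEquiv_projLP u).symm.trans hu⟩
  exact hmin k hk

lemma orientedEquiv_iff_projLC_eq (u u' : GaussCode n) :
    OrientedEquiv u u' ↔ projLC u = projLC u' := by
  refine ⟨fun h => ((isLexLeastLP_projLC u).of_orientedEquiv h).unique
    (isLexLeastLP_projLC u'), fun h => ?_⟩
  exact (isLexLeastLP_projLC u).2.1.trans (h ▸ (isLexLeastLP_projLC u').2.1.symm)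

lemma isLeftCanonical_projLC (u : GaussCode n) : IsLeftCanonical (projLC u) := by
  obtain ⟨hv, hequiv, hmin⟩ := isLexLeastLP_projLC u
  exact ⟨hv, fun k _ => hmin _ (isLeftPreferred_shiftLP_iterate hv k)
    (hequiv.trans (orientedEquiv_shiftLP_iterate _ k))⟩

lemma projLC_of_isLeftCanonical {w : GaussCode n} (hw : IsLeftCanonical w) : projLC w = w := by
  refine (isLexLeastLP_projLC w).unique ⟨hw.1, .refl w, fun v hv hwv => ?_⟩
  obtain ⟨k, hk, rfl⟩ := (exists_shiftLP_iterate_eq_iff hw.1).2 ⟨hv, hwv⟩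
  exact hw.2 k hk

end GaussCode

open GaussCode in
/-- oriented equivalence is detected by `proj^LC`; moreover `proj^LC`
always produces a left canonical code and fixes left canonical codes, hence induces
a bijection between oriented equivalence classes and left canonical Gauss codes. -/
theorem stmt9 (n : ℕ) [NeZero n] :
    (∀ w w' : GaussCode n, OrientedEquiv w w' ↔ projLC w = projLC w') ∧
    (∀ w : GaussCode n, IsLeftCanonical (projLC w)) ∧
    (∀ w : GaussCode n, IsLeftCanonical w → projLC w = w) :=
  ⟨orientedEquiv_iff_projLC_eq, isLeftCanonical_projLC, fun _ => projLC_of_isLeftCanonical⟩
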